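/- arXiv:2304.07231 — 2 statements merged into one kernel-verified Lean document; each statement's English description precedes it below -/
import Mathlib

section
/- Suppose f is a perfect continuous gyrogroup homomorphism of a T1 strongly paratopological gyrocommutative gyrogroup G onto a strongly topological gyrogroup H (perfect means f is continuous, closed, and every fiber f⁻¹(y) is compact). Then G is also a strongly topological gyrogroup, i.e., the inversion map of G is continuous. -/
/-- A gyrogroup: a groupoid with identity, inverses, gyroautomorphisms satisfying the
left gyroassociative law and the left loop property. -/
class Gyrogroup (G : Type*) extends Zero G, Add G, Neg G where
  gyr : G → G → G → G
  zero_add : ∀ x : G, 0 + x = x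
  add_zero : ∀ x : G, x + 0 = x
  neg_add_cancel : ∀ x : G, -x + x = 0
  add_neg_cancel : ∀ x : G, x + -x = 0
  gyr_bijective : ∀ x y : G, Function.Bijective (gyr x y)
  gyr_add : ∀ x y a b : G, gyr x y (a + b) = gyr x y a + gyr x y b
  add_gyr_assoc : ∀ x y z : G, x + (y + z) = (x + y) + gyr x y z
  gyr_left_loop : ∀ x y : G, gyr (x + y) y = gyr x y

open Gyrogroup

/-- `𝒰` is a neighborhood base at the point `x`. -/
def IsNhdsBasisAt {G : Type*} [TopologicalSpace G] (x : G) (𝒰 : Set (Set G)) : Prop :=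
  (∀ U ∈ 𝒰, U ∈ nhds x) ∧ ∀ V ∈ nhds x, ∃ U ∈ 𝒰, U ⊆ V

/-- Every member of `𝒰` is invariant under all gyroautomorphisms: this is the witness that
a paratopological gyrogroup is *strongly* paratopological when `𝒰` is a nbhd base at `0`. -/
def GyrInvariantBase {G : Type*} [Gyrogroup G] (𝒰 : Set (Set G)) : Prop :=
  ∀ U ∈ 𝒰, ∀ x y : G, gyr x y '' U = U


namespace GyroAux

variable {G : Type*} [Gyrogroup G]

lemma g_add_left_cancel {a x y : G} (h : a + x = a + y) : x = y := by
  have h1 : -a + (a + x) = -a + (a + y) := by rw [h]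
  rw [Gyrogroup.add_gyr_assoc, Gyrogroup.add_gyr_assoc, Gyrogroup.neg_add_cancel,
    Gyrogroup.zero_add, Gyrogroup.zero_add] at h1
  exact (Gyrogroup.gyr_bijective (-a) a).1 h1

lemma g_gyr_zero_left (a : G) (z : G) : gyr (0 : G) a z = z := by
  have h := Gyrogroup.add_gyr_assoc (0 : G) a z
  rw [Gyrogroup.zero_add, Gyrogroup.zero_add] at h
  exact (g_add_left_cancel h).symm

lemma g_gyr_neg_add (a : G) (z : G) : gyr (-a) a z = z := by
  have h := Gyrogroup.gyr_left_loop (-a) a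
  rw [Gyrogroup.neg_add_cancel] at h
  rw [← h, g_gyr_zero_left]

lemma g_gyr_add_neg (a : G) (z : G) : gyr a (-a) z = z := by
  have h := Gyrogroup.gyr_left_loop a (-a)
  rw [Gyrogroup.add_neg_cancel] at h
  rw [← h, g_gyr_zero_left]

lemma g_neg_add_cancel_left (a x : G) : -a + (a + x) = x := by
  rw [Gyrogroup.add_gyr_assoc, Gyrogroup.neg_add_cancel, Gyrogroup.zero_add, g_gyr_neg_add]

lemma g_add_neg_cancel_left (a x : G) : a + (-a + x) = x := by
  rw [Gyrogroup.add_gyr_assoc, Gyrogroup.add_neg_cancel, Gyrogroup.zero_add, g_gyr_add_neg]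

lemma g_eq_neg_of_add_eq_zero {u y : G} (h : u + y = 0) : y = -u := by
  have := g_neg_add_cancel_left u y
  rw [h, Gyrogroup.add_zero] at this
  exact this.symm

lemma g_neg_neg (a : G) : -(-a) = a :=
  (g_eq_neg_of_add_eq_zero (Gyrogroup.neg_add_cancel a)).symm

lemma g_neg_zero : -(0 : G) = 0 :=
  (g_eq_neg_of_add_eq_zero (Gyrogroup.zero_add (0 : G))).symm

lemma g_gyr_zero (a b : G) : gyr a b (0 : G) = 0 := by
  have h : gyr a b (0 : G) + gyr a b (0 : G) = gyr a b (0 : G) + 0 := by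
    rw [← Gyrogroup.gyr_add, Gyrogroup.zero_add, Gyrogroup.add_zero]
  exact g_add_left_cancel h

lemma g_gyr_neg (a b x : G) : gyr a b (-x) = -(gyr a b x) := by
  apply g_eq_neg_of_add_eq_zero
  rw [← Gyrogroup.gyr_add, Gyrogroup.add_neg_cancel, g_gyr_zero]

lemma g_gyrosum_inv (a b : G) : gyr a b (-b + -a) = -(a + b) := by
  apply g_eq_neg_of_add_eq_zero
  rw [← Gyrogroup.add_gyr_assoc, g_add_neg_cancel_left, Gyrogroup.add_neg_cancel]

/-- The automorphic inverse property holds in gyrocommutative gyrogroups. -/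
lemma g_aip (hc : ∀ a b : G, a + b = gyr a b (b + a)) (a b : G) :
    -(a + b) = -a + -b := by
  have h1 : gyr b a (-(a + b)) = gyr b a (-a + -b) := by
    rw [g_gyrosum_inv b a, g_gyr_neg, ← hc b a]
  exact (Gyrogroup.gyr_bijective b a).1 h1

end GyroAux

/-- If `f` is a perfect continuous surjective gyrogroup homomorphism from a
T1 strongly paratopological gyrocommutative gyrogroup `G` onto a strongly topological
gyrogroup `H`, then the inversion of `G` is continuous. -/
theorem perfect_homomorphism_onto_strongly_topological_gyrogroup_inv_continuous
    {G : Type*} {H : Type*} [Gyrogroup G] [TopologicalSpace G] [Gyrogroup H]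
    [TopologicalSpace H] [T1Space G]
    (hGadd : Continuous fun p : G × G => p.1 + p.2)
    (𝒰 : Set (Set G)) (hGbase : IsNhdsBasisAt (0 : G) 𝒰) (hGstrong : GyrInvariantBase 𝒰)
    (hgyrocomm : ∀ a b : G, a + b = gyr a b (b + a))
    (hHadd : Continuous fun p : H × H => p.1 + p.2)
    (𝒱 : Set (Set H)) (hHbase : IsNhdsBasisAt (0 : H) 𝒱) (hHstrong : GyrInvariantBase 𝒱)
    (hHneg : Continuous fun y : H => -y)
    (f : G → H) (hfhom : ∀ a b : G, f (a + b) = f a + f b)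
    (hfcont : Continuous f) (hfclosed : IsClosedMap f)
    (hffiber : ∀ y : H, IsCompact (f ⁻¹' {y}))
    (hfsurj : Function.Surjective f) :
    Continuous fun x : G => -x := by
  have hproper : IsProperMap f :=
    isProperMap_iff_isClosedMap_and_compact_fibers.mpr ⟨hfcont, hfclosed, hffiber⟩
  have hf0 : f 0 = 0 := by
    have h : f 0 + f 0 = f 0 + 0 := by
      rw [← hfhom, Gyrogroup.zero_add, Gyrogroup.add_zero]
    exact GyroAux.g_add_left_cancel h
  have hfneg : ∀ x : G, f (-x) = -(f x) := by
    intro x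
    have h : f (-x) + f x = 0 := by rw [← hfhom, Gyrogroup.neg_add_cancel, hf0]
    have h2 : f x = -(f (-x)) := GyroAux.g_eq_neg_of_add_eq_zero h
    rw [h2, GyroAux.g_neg_neg]
  have haip : ∀ a b : G, -(a + b) = -a + -b := GyroAux.g_aip hgyrocomm
  -- continuity of inversion at 0
  have hcont0 : Filter.Tendsto (fun x : G => -x) (nhds 0) (nhds (0 : G)) := by
    rw [Filter.tendsto_iff_ultrafilter]
    intro U hU
    have hfU0 : Filter.Tendsto f (U : Filter G) (nhds (0 : H)) := by
      have := (hfcont.tendsto (0 : G)).mono_left hU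
      rwa [hf0] at this
    have hfnegU : Filter.Tendsto f ((U.map fun x : G => -x) : Filter G) (nhds (0 : H)) := by
      rw [Ultrafilter.coe_map, Filter.tendsto_map'_iff]
      have h1 : Filter.Tendsto (fun x : G => -(f x)) (U : Filter G) (nhds (0 : H)) := by
        have := (hHneg.tendsto (0 : H)).comp hfU0
        rwa [GyroAux.g_neg_zero] at this
      exact h1.congr fun x => (hfneg x).symm
    obtain ⟨k, hk0, hkle⟩ := hproper.ultrafilter_le_nhds_of_tendsto hfnegU
    rw [Ultrafilter.coe_map] at hkle
    have hnegU : Filter.Tendsto (fun x : G => -x) (U : Filter G) (nhds k) := hkle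
    have hkzero : k = 0 := by
      have hid : Filter.Tendsto (fun x : G => x) (U : Filter G) (nhds (0 : G)) := hU
      have hpair : Filter.Tendsto (fun x : G => ((-x : G), x)) (U : Filter G)
          (nhds ((k, 0) : G × G)) := by
        rw [nhds_prod_eq]
        exact hnegU.prodMk hid
      have hconst : Filter.Tendsto (fun x : G => -x + x) (U : Filter G) (nhds (k + 0)) :=
        (hGadd.tendsto ((k, 0) : G × G)).comp hpair
      rw [Gyrogroup.add_zero] at hconst
      have hconst' : Filter.Tendsto (fun _ : G => (0 : G)) (U : Filter G) (nhds k) :=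
        hconst.congr fun x => Gyrogroup.neg_add_cancel x
      exact (tendsto_const_nhds_iff.mp hconst').symm
    rw [hkzero] at hnegU
    exact hnegU
  -- continuity everywhere
  rw [continuous_iff_continuousAt]
  intro a
  have hLcont : Continuous fun x : G => -a + x :=
    hGadd.comp (continuous_const.prodMk continuous_id)
  have hkey : ∀ x : G, -a + -(-a + x) = -x := by
    intro x
    rw [haip (-a) x, GyroAux.g_neg_neg, GyroAux.g_neg_add_cancel_left]
  have t1 : Filter.Tendsto (fun x : G => -a + x) (nhds a) (nhds (0 : G)) := by
    have := hLcont.tendsto a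
    rwa [Gyrogroup.neg_add_cancel] at this
  have t3 : Filter.Tendsto (fun x : G => -a + x) (nhds (0 : G)) (nhds (-a)) := by
    have := hLcont.tendsto (0 : G)
    rwa [Gyrogroup.add_zero] at this
  have t4 : Filter.Tendsto (fun x : G => -a + -(-a + x)) (nhds a) (nhds (-a)) :=
    t3.comp (hcont0.comp t1)
  have t5 : Filter.Tendsto (fun x : G => -x) (nhds a) (nhds (-a)) :=
    Filter.Tendsto.congr hkey t4
  exact t5
end

section
/- Let 𝒰 be a neighborhood base at the identity 0 of a paratopological gyrogroup G such that gyr[x,y](U) = U for every U ∈ 𝒰 and all x, y ∈ G (i.e., 𝒰 witnesses that G is a strongly paratopological gyrogroup). If U, V ∈ 𝒰 and V⊕V ⊆ U, then ⊖(cl(⊖V)) ⊆ U, where A⊕B = {a⊕b : a ∈ A, b ∈ B}, ⊖A = {⊖a : a ∈ A}, and cl denotes topological closure. -/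
open Gyrogroup

section Aux

variable {G : Type*} [Gyrogroup G]

lemma neg_add_add' (a x : G) : -a + (a + x) = gyr (-a) a x := by
  rw [Gyrogroup.add_gyr_assoc, Gyrogroup.neg_add_cancel, Gyrogroup.zero_add]

lemma left_add_injective (a : G) : Function.Injective (fun z : G => a + z) := by
  intro x y h
  have hx := neg_add_add' a x
  have hy := neg_add_add' a y
  simp only at h
  rw [h] at hx
  exact (gyr_bijective (-a) a).1 (hx.symm.trans hy)

lemma gyr_zero_left' (a z : G) : gyr (0 : G) a z = z := by
  apply left_add_injective a
  show a + gyr 0 a z = a + z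
  have := add_gyr_assoc (0 : G) a z
  rw [Gyrogroup.zero_add, Gyrogroup.zero_add] at this
  exact this.symm

lemma gyr_neg_self (a z : G) : gyr (-a) a z = z := by
  have h := gyr_left_loop (-a) a
  rw [Gyrogroup.neg_add_cancel] at h
  rw [← h, gyr_zero_left']

lemma gyro_left_cancel (a x : G) : -a + (a + x) = x := by
  rw [neg_add_add', gyr_neg_self]

lemma eq_neg_of_add_eq_zero' {a b : G} (h : a + b = 0) : b = -a := by
  apply left_add_injective a
  show a + b = a + -a
  rw [h, Gyrogroup.add_neg_cancel]

lemma gyro_neg_neg (a : G) : -(-a) = a :=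
  (eq_neg_of_add_eq_zero' (Gyrogroup.neg_add_cancel a)).symm

lemma gyro_left_cancel' (a x : G) : a + (-a + x) = x := by
  have := gyro_left_cancel (-a) x
  rwa [gyro_neg_neg] at this

lemma gyr_neg_add (x v : G) : gyr x v (-v + -x) = -(x + v) := by
  apply eq_neg_of_add_eq_zero'
  rw [← add_gyr_assoc, gyro_left_cancel', Gyrogroup.add_neg_cancel]

end Aux

/-- If `𝒰` witnesses that `G` is a strongly paratopological gyrogroup and
`U, V ∈ 𝒰` satisfy `V⊕V ⊆ U`, then `⊖(cl(⊖V)) ⊆ U`. -/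
theorem neg_closure_neg_subset_of_strong_base
    {G : Type*} [Gyrogroup G] [TopologicalSpace G]
    (hadd : Continuous fun p : G × G => p.1 + p.2)
    (𝒰 : Set (Set G)) (hbase : IsNhdsBasisAt (0 : G) 𝒰) (hstrong : GyrInvariantBase 𝒰) :
    ∀ U ∈ 𝒰, ∀ V ∈ 𝒰,
      Set.image2 (fun u v => u + v) V V ⊆ U →
      (fun x => -x) '' closure ((fun x => -x) '' V) ⊆ U := by
  intro U hU V hV hVV
  rintro _ ⟨a, ha, rfl⟩
  -- the set `{z | -a + z ∈ V}` is a neighborhood of `a`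
  have hVnhds : V ∈ nhds (0 : G) := hbase.1 V hV
  have hcont : Continuous fun z : G => -a + z :=
    hadd.comp (continuous_const.prodMk continuous_id)
  have hpre : {z : G | -a + z ∈ V} ∈ nhds a := by
    have h0 : -a + a = 0 := Gyrogroup.neg_add_cancel a
    have := hcont.continuousAt (x := a).preimage_mem_nhds (by rwa [h0])
    exact this
  -- `a ∈ closure (-V)`, so this neighborhood meets `-V`
  obtain ⟨z, hz1, hz2⟩ := (mem_closure_iff_nhds.mp ha) _ hpre
  obtain ⟨w, hw, rfl⟩ := hz2
  set v : G := -a + -w with hv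
  have hvV : v ∈ V := hz1
  have hav : a + v = -w := gyro_left_cancel' a (-w)
  -- `gyr a v (-v + -a) = w`
  have hkey : Gyrogroup.gyr a v (-v + -a) = w := by
    rw [gyr_neg_add, hav, gyro_neg_neg]
  -- invariance: `w ∈ V = gyr a v '' V`, so `-v + -a ∈ V`
  have hinv := hstrong V hV a v
  have : w ∈ Gyrogroup.gyr a v '' V := hinv.symm ▸ hw
  obtain ⟨u, huV, hu⟩ := this
  have huu : u = -v + -a := (Gyrogroup.gyr_bijective a v).1 (hu.trans hkey.symm)
  have : -a = v + (-v + -a) := (gyro_left_cancel' v (-a)).symm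
  show -a ∈ U
  rw [this]
  exact hVV ⟨v, hvV, -v + -a, huu ▸ huV, rfl⟩
end
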